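/- (Expected single-shot error of the randomized product.) Let (Ω,P), Ũ, Q and Q̃ be as in the probabilistic setup, let U : Fin N → Matrix (Fin d) (Fin d) ℂ be fixed unitary matrices, and set Q = (Q_{N−1}U_{N−1})···(Q_0U_0). Let b be an integer with 2^b ≥ √N, and suppose that for every l: almost surely ‖Ũ_l(ω) − E[Ũ_l]‖ ≤ 2π·2^{−b}, and ‖E[Ũ_l] − U_l‖ ≤ π²·2^{−(2b+1)}. Then for every ψ ∈ EuclideanSpace ℂ (Fin d) with ‖ψ‖ ≤ 1, E[‖(Q̃ − Q)·ψ‖] ≤ 4π·√N·2^{−b}. -/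

import Mathlib

/-! Taking expectations factor by factor (independence), `E[Q̃] = ∏ Q_l E[Ũ_l]`, which differs
from `Q` by at most `N π² 2^{-(2b+1)}` in operator norm by telescoping. Since `Q̃` and `Q` are
unitary, `‖(Q̃ - Q)ψ‖² = 2 Re⟪Qψ, (Q - Q̃)ψ⟫` is affine in `Q̃`, so its mean is controlled by
`‖E[Q̃] - Q‖` alone; Jensen's inequality then gives `E‖(Q̃ - Q)ψ‖ ≤ √N π 2^{-b}`. -/

open MeasureTheory ProbabilityTheory Real

/-- The ℓ²→ℓ² operator norm of a square complex matrix. -/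
noncomputable def opNorm {n : Type*} [Fintype n] [DecidableEq n] (M : Matrix n n ℂ) : ℝ :=
  ‖Matrix.toEuclideanCLM (𝕜 := ℂ) M‖

/-- The ordered product `F (N−1) * ⋯ * F 0` (factors in decreasing index order). -/
noncomputable def prodDesc {N d : ℕ} (F : Fin N → Matrix (Fin d) (Fin d) ℂ) :
    Matrix (Fin d) (Fin d) ℂ :=
  ((List.ofFn F).reverse).prod

noncomputable instance matrixMeasurableSpace {d : ℕ} : MeasurableSpace (Matrix (Fin d) (Fin d) ℂ) :=
  inferInstanceAs (MeasurableSpace (Fin d → Fin d → ℂ))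

/-- Entrywise (Bochner) expectation of a random matrix. -/
noncomputable def mExp {Ω : Type*} [MeasurableSpace Ω] (P : Measure Ω) {d : ℕ}
    (X : Ω → Matrix (Fin d) (Fin d) ℂ) : Matrix (Fin d) (Fin d) ℂ :=
  Matrix.of fun p q => ∫ ω, X ω p q ∂P

/-- A matrix acting on a Euclidean vector by `Matrix.mulVec`. -/
noncomputable def mvec {d : ℕ} (M : Matrix (Fin d) (Fin d) ℂ)
    (ψ : EuclideanSpace ℂ (Fin d)) : EuclideanSpace ℂ (Fin d) :=
  (WithLp.equiv 2 _).symm (M.mulVec (WithLp.equiv 2 _ ψ))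

open scoped Matrix.Norms.L2Operator

section ListProd

variable {ι R : Type*} [SeminormedRing R]

theorem List.norm_mul_prod_le (x : R) {l : List R} (hl : ∀ a ∈ l, ‖a‖ ≤ 1) :
    ‖x * l.prod‖ ≤ ‖x‖ := by
  induction l generalizing x with
  | nil => simp
  | cons a t ih =>
    rw [List.prod_cons, ← mul_assoc]
    calc ‖x * a * t.prod‖ ≤ ‖x * a‖ := ih _ fun b hb => hl b (List.mem_cons_of_mem a hb)
      _ ≤ ‖x‖ * ‖a‖ := norm_mul_le _ _
      _ ≤ ‖x‖ := mul_le_of_le_one_right (norm_nonneg _) (hl a List.mem_cons_self)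

theorem List.norm_prod_map_sub_prod_map_le (l : List ι) {F G : ι → R}
    (hF : ∀ i ∈ l, ‖F i‖ ≤ 1) (hG : ∀ i ∈ l, ‖G i‖ ≤ 1) :
    ‖(l.map F).prod - (l.map G).prod‖ ≤ (l.map fun i => ‖F i - G i‖).sum := by
  induction l with
  | nil => simp
  | cons i t ih =>
    rw [List.forall_mem_cons] at hF hG
    set D := (t.map F).prod - (t.map G).prod
    have hsplit : F i * (t.map F).prod - G i * (t.map G).prod
        = F i * D + (F i - G i) * (t.map G).prod := by
      simp only [D]; noncomm_ring
    have hhead : ‖F i * D‖ ≤ ‖D‖ :=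
      (norm_mul_le _ _).trans (mul_le_of_le_one_left (norm_nonneg _) hF.1)
    have htail : ‖(F i - G i) * (t.map G).prod‖ ≤ ‖F i - G i‖ :=
      List.norm_mul_prod_le _ (by simpa using hG.2)
    simp only [List.map_cons, List.prod_cons, List.sum_cons, hsplit]
    linarith [norm_add_le (F i * D) ((F i - G i) * (t.map G).prod), ih hF.2 hG.2]

end ListProd

theorem CStarRing.norm_le_one_of_mem_unitary {E : Type*} [NormedRing E] [StarRing E]
    [CStarRing E] {U : E} (hU : U ∈ unitary E) : ‖U‖ ≤ 1 := by
  have hone : ‖(1 : E)‖ = ‖(1 : E)‖ * ‖(1 : E)‖ := by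
    simpa using CStarRing.norm_star_mul_self (x := (1 : E))
  have : ‖U‖ = ‖(1 : E)‖ := by simpa using norm_mul_mem_unitary (1 : E) hU
  nlinarith [norm_nonneg (1 : E)]

section Independence

variable {Ω ι A : Type*} [MeasurableSpace Ω] {P : Measure Ω}

theorem ProbabilityTheory.iIndepFun.indepFun_list_prod [Monoid A] [MeasurableSpace A]
    [MeasurableMul₂ A] {X : ι → Ω → A} (hX : iIndepFun X P) (hmeas : ∀ i, Measurable (X i))
    {i : ι} {l : List ι} (hi : i ∉ l) :
    IndepFun (X i) (fun ω => (l.map (X · ω)).prod) P := by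
  classical
  have h := hX.indepFun_finset {i} l.toFinset (by simpa using hi) hmeas
  have hprod := List.measurable_fun_prod
    (l.attach.map fun a (g : l.toFinset → A) => g ⟨a.1, List.mem_toFinset.mpr a.2⟩)
    (by simp only [List.mem_map]; rintro _ ⟨a, -, rfl⟩; exact measurable_pi_apply _)
  convert h.comp (measurable_pi_apply ⟨i, Finset.mem_singleton_self i⟩) hprod using 1 <;>
    funext ω <;> simp [Function.comp_def]

variable [NormedRing A] [NormedAlgebra ℝ A] [MeasurableSpace A] [BorelSpace A]
  [SecondCountableTopology A] {X : ι → Ω → A}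

theorem ProbabilityTheory.iIndepFun.integrable_list_prod (hX : iIndepFun X P)
    (hmeas : ∀ i, Measurable (X i)) (hint : ∀ i, Integrable (X i) P) {l : List ι}
    (hl : l.Nodup) : Integrable (fun ω => (l.map (X · ω)).prod) P := by
  have := hX.isProbabilityMeasure
  induction l with
  | nil => simp
  | cons i t ih =>
    rw [List.nodup_cons] at hl
    exact (hX.indepFun_list_prod hmeas hl.1).integrable_bilin (hint i) (ih hl.2)
      (ContinuousLinearMap.mul ℝ A)

theorem ProbabilityTheory.iIndepFun.integral_list_prod [CompleteSpace A] (hX : iIndepFun X P)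
    (hmeas : ∀ i, Measurable (X i)) (hint : ∀ i, Integrable (X i) P) {l : List ι}
    (hl : l.Nodup) : ∫ ω, (l.map (X · ω)).prod ∂P = (l.map fun i => ∫ ω, X i ω ∂P).prod := by
  have := hX.isProbabilityMeasure
  induction l with
  | nil => simp
  | cons i t ih =>
    rw [List.nodup_cons] at hl
    simp only [List.map_cons, List.prod_cons, ← ih hl.2]
    exact (hX.indepFun_list_prod hmeas hl.1).integral_bilin (hint i)
      (hX.integrable_list_prod hmeas hint hl.2) (ContinuousLinearMap.mul ℝ A)

end Independence

section SecondMoment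

variable {Ω : Type*} [MeasurableSpace Ω] {P : Measure Ω} [IsProbabilityMeasure P]

theorem sq_integral_le_integral_sq {f : Ω → ℝ} (hf : MemLp f 2 P) :
    (∫ ω, f ω ∂P) ^ 2 ≤ ∫ ω, f ω ^ 2 ∂P := by
  have h := variance_nonneg f P
  rw [variance_eq_sub hf] at h
  simpa [sub_nonneg] using h

variable {H : Type*} [NormedAddCommGroup H] [NormedSpace ℝ H] [CompleteSpace H] {V : Ω → H}
  {y : H}

theorem integral_norm_sub_sq_le (𝕜 : Type*) [RCLike 𝕜] [InnerProductSpace 𝕜 H]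
    (hV : Integrable V P) (hVy : ∀ᵐ ω ∂P, ‖V ω‖ ≤ ‖y‖) :
    ∫ ω, ‖V ω - y‖ ^ 2 ∂P ≤ 2 * ‖y‖ * ‖(∫ ω, V ω ∂P) - y‖ := by
  have hpointwise : ∀ᵐ ω ∂P, ‖V ω - y‖ ^ 2 ≤ 2 * RCLike.re (inner 𝕜 y (y - V ω)) := by
    filter_upwards [hVy] with ω hω
    have hsq : ‖V ω‖ ^ 2 ≤ ‖y‖ ^ 2 := pow_le_pow_left₀ (norm_nonneg _) hω 2
    rw [norm_sub_sq (𝕜 := 𝕜), inner_sub_right, map_sub, inner_self_eq_norm_sq (𝕜 := 𝕜),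
      inner_re_symm (𝕜 := 𝕜) y]
    linarith
  have hyV : Integrable (fun ω => y - V ω) P := (integrable_const y).sub hV
  have hinner : Integrable (fun ω => inner 𝕜 y (y - V ω)) P := hyV.const_inner y
  have hmean : ∫ ω, 2 * RCLike.re (inner 𝕜 y (y - V ω)) ∂P
      = 2 * RCLike.re (inner 𝕜 y (y - ∫ ω, V ω ∂P)) := by
    rw [integral_const_mul, integral_re hinner, integral_inner hyV,
      integral_sub (integrable_const y) hV, integral_const]
    simp
  calc ∫ ω, ‖V ω - y‖ ^ 2 ∂P ≤ ∫ ω, 2 * RCLike.re (inner 𝕜 y (y - V ω)) ∂P :=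
        integral_mono_of_nonneg (.of_forall fun _ => by positivity) (hinner.re.const_mul 2)
          hpointwise
    _ = 2 * RCLike.re (inner 𝕜 y (y - ∫ ω, V ω ∂P)) := hmean
    _ ≤ 2 * (‖y‖ * ‖(∫ ω, V ω ∂P) - y‖) := by
        rw [norm_sub_rev]
        gcongr
        exact (RCLike.re_le_norm _).trans (norm_inner_le_norm _ _)
    _ = 2 * ‖y‖ * ‖(∫ ω, V ω ∂P) - y‖ := by ring

theorem integral_norm_sub_le_sqrt (𝕜 : Type*) [RCLike 𝕜] [InnerProductSpace 𝕜 H]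
    (hV : Integrable V P) (hVy : ∀ᵐ ω ∂P, ‖V ω‖ ≤ ‖y‖) :
    ∫ ω, ‖V ω - y‖ ∂P ≤ √(2 * ‖y‖ * ‖(∫ ω, V ω ∂P) - y‖) := by
  have hbound : ∀ᵐ ω ∂P, ‖V ω - y‖ ∈ Set.Icc 0 (2 * ‖y‖) := by
    filter_upwards [hVy] with ω hω
    exact ⟨norm_nonneg _, by linarith [norm_sub_le (V ω) y]⟩
  have hmem : MemLp (fun ω => ‖V ω - y‖) 2 P :=
    memLp_of_bounded hbound (hV.1.sub aestronglyMeasurable_const).norm 2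
  rw [Real.le_sqrt (integral_nonneg fun _ => norm_nonneg _) (by positivity)]
  exact (sq_integral_le_integral_sq hmem).trans (integral_norm_sub_sq_le 𝕜 hV hVy)

end SecondMoment

section Matrices

variable {d : ℕ}

/-- The L2 operator norm induces the product topology on matrices, so the entrywise σ-algebra is
its Borel σ-algebra. -/
instance : BorelSpace (Matrix (Fin d) (Fin d) ℂ) :=
  inferInstanceAs (BorelSpace (Fin d → Fin d → ℂ))

theorem opNorm_eq_norm (M : Matrix (Fin d) (Fin d) ℂ) : opNorm M = ‖M‖ :=
  rfl

theorem prodDesc_eq_list_prod {N : ℕ} (F : Fin N → Matrix (Fin d) (Fin d) ℂ) :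
    prodDesc F = ((List.finRange N).reverse.map F).prod := by
  rw [prodDesc, List.ofFn_eq_map, List.map_reverse]

theorem prodDesc_mem_unitaryGroup {N : ℕ} {F : Fin N → Matrix (Fin d) (Fin d) ℂ}
    (hF : ∀ j, F j ∈ Matrix.unitaryGroup (Fin d) ℂ) :
    prodDesc F ∈ Matrix.unitaryGroup (Fin d) ℂ := by
  rw [prodDesc_eq_list_prod]
  exact Submonoid.list_prod_mem _ (by simpa using fun j => hF j)

theorem norm_prodDesc_mul_sub_prodDesc_mul_le {N : ℕ} {Q A U : Fin N → Matrix (Fin d) (Fin d) ℂ}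
    (hQ : ∀ j, Q j ∈ Matrix.unitaryGroup (Fin d) ℂ) (hA : ∀ j, ‖A j‖ ≤ 1)
    (hU : ∀ j, U j ∈ Matrix.unitaryGroup (Fin d) ℂ) {ε : ℝ} (hε : ∀ j, ‖A j - U j‖ ≤ ε) :
    ‖prodDesc (fun j => Q j * A j) - prodDesc (fun j => Q j * U j)‖ ≤ N * ε := by
  rw [prodDesc_eq_list_prod, prodDesc_eq_list_prod]
  calc _ ≤ ((List.finRange N).reverse.map fun j => ‖Q j * A j - Q j * U j‖).sum :=
        List.norm_prod_map_sub_prod_map_le _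
          (fun j _ => by rw [CStarRing.norm_mem_unitary_mul _ (hQ j)]; exact hA j)
          (fun j _ => CStarRing.norm_le_one_of_mem_unitary (mul_mem (hQ j) (hU j)))
    _ ≤ N * ε := by
        simp only [← mul_sub, CStarRing.norm_mem_unitary_mul _ (hQ _)]
        simpa using List.sum_le_card_nsmul ((List.finRange N).reverse.map fun j => ‖A j - U j‖) ε
          (by simpa using hε)

theorem norm_mvec_le (M : Matrix (Fin d) (Fin d) ℂ) (ψ : EuclideanSpace ℂ (Fin d)) :
    ‖mvec M ψ‖ ≤ ‖M‖ * ‖ψ‖ :=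
  (Matrix.toEuclideanCLM (𝕜 := ℂ) M).le_opNorm ψ

theorem norm_mvec_of_mem_unitaryGroup {M : Matrix (Fin d) (Fin d) ℂ}
    (hM : M ∈ Matrix.unitaryGroup (Fin d) ℂ) (ψ : EuclideanSpace ℂ (Fin d)) :
    ‖mvec M ψ‖ = ‖ψ‖ :=
  ContinuousLinearMap.norm_map_of_mem_unitary
    (Unitary.map_mem (Matrix.toEuclideanCLM (n := Fin d) (𝕜 := ℂ)) hM) ψ

noncomputable def mvecCLM (ψ : EuclideanSpace ℂ (Fin d)) :
    Matrix (Fin d) (Fin d) ℂ →L[ℂ] EuclideanSpace ℂ (Fin d) :=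
  LinearMap.toContinuousLinearMap ((LinearMap.applyₗ ψ).comp Matrix.toEuclideanLin.toLinearMap)

@[simp]
theorem mvecCLM_apply (ψ : EuclideanSpace ℂ (Fin d)) (M : Matrix (Fin d) (Fin d) ℂ) :
    mvecCLM ψ M = mvec M ψ :=
  rfl

theorem mvec_sub (A B : Matrix (Fin d) (Fin d) ℂ) (ψ : EuclideanSpace ℂ (Fin d)) :
    mvec (A - B) ψ = mvec A ψ - mvec B ψ :=
  map_sub (mvecCLM ψ) A B

end Matrices

section RandomMatrices

variable {d N : ℕ} {Ω : Type*} [MeasurableSpace Ω] {P : Measure Ω}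

theorem mExp_eq_integral {X : Ω → Matrix (Fin d) (Fin d) ℂ} (hX : Integrable X P) :
    mExp P X = ∫ ω, X ω ∂P := by
  ext p q
  exact (Matrix.entryLinearMap ℂ ℂ p q).toContinuousLinearMap.integral_comp_comm hX

theorem integral_mvec {X : Ω → Matrix (Fin d) (Fin d) ℂ} (hX : Integrable X P)
    (ψ : EuclideanSpace ℂ (Fin d)) : ∫ ω, mvec (X ω) ψ ∂P = mvec (∫ ω, X ω ∂P) ψ :=
  (mvecCLM ψ).integral_comp_comm hX

theorem ProbabilityTheory.iIndepFun.integrable_prodDesc {X : Fin N → Ω → Matrix (Fin d) (Fin d) ℂ}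
    (hX : iIndepFun X P) (hmeas : ∀ j, Measurable (X j)) (hint : ∀ j, Integrable (X j) P) :
    Integrable (fun ω => prodDesc (X · ω)) P := by
  simpa only [prodDesc_eq_list_prod] using
    hX.integrable_list_prod hmeas hint (List.nodup_reverse.mpr (List.nodup_finRange N))

theorem ProbabilityTheory.iIndepFun.integral_prodDesc {X : Fin N → Ω → Matrix (Fin d) (Fin d) ℂ}
    (hX : iIndepFun X P) (hmeas : ∀ j, Measurable (X j)) (hint : ∀ j, Integrable (X j) P) :
    ∫ ω, prodDesc (X · ω) ∂P = prodDesc fun j => ∫ ω, X j ω ∂P := by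
  simp only [prodDesc_eq_list_prod]
  exact hX.integral_list_prod hmeas hint (List.nodup_reverse.mpr (List.nodup_finRange N))

theorem integral_norm_mvec_sub_le [IsProbabilityMeasure P] {X : Ω → Matrix (Fin d) (Fin d) ℂ}
    {M : Matrix (Fin d) (Fin d) ℂ} (hX : Integrable X P)
    (hXu : ∀ᵐ ω ∂P, X ω ∈ Matrix.unitaryGroup (Fin d) ℂ)
    (hM : M ∈ Matrix.unitaryGroup (Fin d) ℂ) (ψ : EuclideanSpace ℂ (Fin d)) :
    ∫ ω, ‖mvec (X ω - M) ψ‖ ∂P ≤ √(2 * ‖(∫ ω, X ω ∂P) - M‖) * ‖ψ‖ := by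
  have hXψ : ∀ᵐ ω ∂P, ‖mvec (X ω) ψ‖ ≤ ‖mvec M ψ‖ := by
    filter_upwards [hXu] with ω hω
    rw [norm_mvec_of_mem_unitaryGroup hω, norm_mvec_of_mem_unitaryGroup hM]
  have h := integral_norm_sub_le_sqrt ℂ ((mvecCLM ψ).integrable_comp hX) hXψ
  simp only [mvecCLM_apply, integral_mvec hX, ← mvec_sub, norm_mvec_of_mem_unitaryGroup hM] at h
  calc ∫ ω, ‖mvec (X ω - M) ψ‖ ∂P ≤ √(2 * ‖ψ‖ * ‖mvec ((∫ ω, X ω ∂P) - M) ψ‖) := h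
    _ ≤ √(2 * ‖ψ‖ * (‖(∫ ω, X ω ∂P) - M‖ * ‖ψ‖)) := by grw [norm_mvec_le]
    _ = √(2 * ‖(∫ ω, X ω ∂P) - M‖) * ‖ψ‖ := by
        rw [show 2 * ‖ψ‖ * (‖(∫ ω, X ω ∂P) - M‖ * ‖ψ‖) = 2 * ‖(∫ ω, X ω ∂P) - M‖ * ‖ψ‖ ^ 2 by
          ring, Real.sqrt_mul' _ (by positivity), Real.sqrt_sq (norm_nonneg _)]

end RandomMatrices

theorem sqrt_two_mul_natCast_mul_pi_sq_mul_two_zpow (N : ℕ) (b : ℤ) :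
    √(2 * (N * (π ^ 2 * (2 : ℝ) ^ (-(2 * b + 1))))) = √N * π * 2 ^ (-b) := by
  have htwo : ((2 : ℝ) ^ (-b)) ^ 2 = 2 * 2 ^ (-(2 * b + 1)) := by
    rw [← zpow_natCast, ← zpow_mul, ← zpow_one_add₀ two_ne_zero]
    ring_nf
  rw [← Real.sqrt_sq (by positivity : 0 ≤ √N * π * 2 ^ (-b)), mul_pow, mul_pow,
    Real.sq_sqrt (Nat.cast_nonneg N), htwo]
  ring_nf

theorem expected_single_shot_error_randomized_product_general
    {Ω : Type*} [MeasurableSpace Ω] (P : Measure Ω) [IsProbabilityMeasure P]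
    (N d : ℕ)
    (Ut : Fin N → Ω → Matrix (Fin d) (Fin d) ℂ)
    (hmeas : ∀ j, Measurable (Ut j))
    (hindep : iIndepFun (m := fun _ => inferInstance) Ut P)
    (hunit : ∀ j, ∀ᵐ ω ∂P, Ut j ω ∈ Matrix.unitaryGroup (Fin d) ℂ)
    (Q : Fin N → Matrix (Fin d) (Fin d) ℂ)
    (hQ : ∀ j, Q j ∈ Matrix.unitaryGroup (Fin d) ℂ)
    (U : Fin N → Matrix (Fin d) (Fin d) ℂ)
    (hU : ∀ j, U j ∈ Matrix.unitaryGroup (Fin d) ℂ)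
    (b : ℤ)
    (hsys : ∀ l,
      opNorm (mExp P (Ut l) - U l) ≤ Real.pi ^ 2 * (2 : ℝ) ^ (-(2 * b + 1)))
    (ψ : EuclideanSpace ℂ (Fin d)) (hψ : ‖ψ‖ ≤ 1) :
    (∫ ω, ‖mvec (prodDesc (fun j => Q j * Ut j ω) -
        prodDesc (fun j => Q j * U j)) ψ‖ ∂P) ≤
      4 * Real.pi * Real.sqrt N * (2 : ℝ) ^ (-b) := by
  have hUt_le : ∀ j, ∀ᵐ ω ∂P, ‖Ut j ω‖ ≤ 1 := fun j =>
    (hunit j).mono fun _ => CStarRing.norm_le_one_of_mem_unitary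
  have hUt_int : ∀ j, Integrable (Ut j) P := fun j =>
    .of_bound (hmeas j).aestronglyMeasurable 1 (hUt_le j)
  have hQUt_indep : iIndepFun (fun j ω => Q j * Ut j ω) P :=
    hindep.comp _ fun j => measurable_const_mul (Q j)
  have hQUt_meas : ∀ j, Measurable fun ω => Q j * Ut j ω := fun j => (hmeas j).const_mul (Q j)
  have hQUt_int : ∀ j, Integrable (fun ω => Q j * Ut j ω) P := fun j => (hUt_int j).const_mul (Q j)
  have hbias : ‖(∫ ω, prodDesc (fun j => Q j * Ut j ω) ∂P) - prodDesc (fun j => Q j * U j)‖ ≤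
      N * (π ^ 2 * (2 : ℝ) ^ (-(2 * b + 1))) := by
    simp only [hQUt_indep.integral_prodDesc hQUt_meas hQUt_int,
      integral_const_mul_of_integrable (hUt_int _)]
    refine norm_prodDesc_mul_sub_prodDesc_mul_le hQ (fun j => ?_) hU fun j => ?_
    · simpa using norm_integral_le_of_norm_le_const (hUt_le j)
    · simpa only [opNorm_eq_norm, mExp_eq_integral (hUt_int j)] using hsys j
  have hQt_unit : ∀ᵐ ω ∂P, prodDesc (fun j => Q j * Ut j ω) ∈ Matrix.unitaryGroup (Fin d) ℂ := by
    filter_upwards [ae_all_iff.mpr hunit] with ω hω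
    exact prodDesc_mem_unitaryGroup fun j => mul_mem (hQ j) (hω j)
  calc _ ≤ √(2 * ‖(∫ ω, prodDesc (fun j => Q j * Ut j ω) ∂P) - prodDesc (fun j => Q j * U j)‖) *
        ‖ψ‖ :=
        integral_norm_mvec_sub_le (hQUt_indep.integrable_prodDesc hQUt_meas hQUt_int) hQt_unit
          (prodDesc_mem_unitaryGroup fun j => mul_mem (hQ j) (hU j)) ψ
    _ ≤ √(2 * (N * (π ^ 2 * (2 : ℝ) ^ (-(2 * b + 1))))) * 1 := by gcongr
    _ = √N * π * 2 ^ (-b) := by rw [mul_one, sqrt_two_mul_natCast_mul_pi_sq_mul_two_zpow]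
    _ ≤ 4 * π * √N * 2 ^ (-b) := by
        have : 0 ≤ √N * π * 2 ^ (-b) := by positivity
        linarith

theorem expected_single_shot_error_randomized_product
    {Ω : Type*} [MeasurableSpace Ω] (P : Measure Ω) [IsProbabilityMeasure P]
    (N d : ℕ) (hN : 1 ≤ N) (hd : 1 ≤ d)
    (Ut : Fin N → Ω → Matrix (Fin d) (Fin d) ℂ)
    (hmeas : ∀ j, Measurable (Ut j))
    (hindep : iIndepFun (m := fun _ => inferInstance) Ut P)
    (hunit : ∀ j, ∀ᵐ ω ∂P, Ut j ω ∈ Matrix.unitaryGroup (Fin d) ℂ)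
    (Q : Fin N → Matrix (Fin d) (Fin d) ℂ)
    (hQ : ∀ j, Q j ∈ Matrix.unitaryGroup (Fin d) ℂ)
    (U : Fin N → Matrix (Fin d) (Fin d) ℂ)
    (hU : ∀ j, U j ∈ Matrix.unitaryGroup (Fin d) ℂ)
    (b : ℤ) (hb : Real.sqrt N ≤ (2 : ℝ) ^ b)
    (hdev : ∀ l, ∀ᵐ ω ∂P,
      opNorm (Ut l ω - mExp P (Ut l)) ≤ 2 * Real.pi * (2 : ℝ) ^ (-b))
    (hsys : ∀ l,
      opNorm (mExp P (Ut l) - U l) ≤ Real.pi ^ 2 * (2 : ℝ) ^ (-(2 * b + 1)))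
    (ψ : EuclideanSpace ℂ (Fin d)) (hψ : ‖ψ‖ ≤ 1) :
    (∫ ω, ‖mvec (prodDesc (fun j => Q j * Ut j ω) -
        prodDesc (fun j => Q j * U j)) ψ‖ ∂P) ≤
      4 * Real.pi * Real.sqrt N * (2 : ℝ) ^ (-b) :=
  expected_single_shot_error_randomized_product_general P N d Ut hmeas hindep hunit Q hQ U hU b hsys
    ψ hψ
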